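/- arXiv:1608.05807 — 2 statements merged into one kernel-verified Lean document; each statement's English description precedes it below -/
import Mathlib

section
/- There exist constants $\gamma>0$ and $\rho>0$ such that for every $\lambda\in\mathbb{C}$ with $|\lambda|^2+1/|\lambda|^2=4$ and every $\eta\in\mathbb{C}$ with $|\eta-\eta_0(\lambda)|\leq\rho$, where $\eta_0(\lambda)=-\tfrac{1}{\sqrt{2}}(\lambda+1/\overline{\lambda})$, one has $\big|\,|\eta|^2+\tfrac{1}{\sqrt{2}}(\lambda\overline{\eta}+\eta/\lambda)\,\big|\geq \gamma\,|\eta-\eta_0(\lambda)|$. -/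
/-!
Expanding the symbol around its nonzero root `η₀ = -c (λ + 1/λ̄)` (`c` real), the constant
terms cancel and `P(η₀ + z) = |z|² - c (z̄/λ̄ + λ̄ z)`. By the reverse triangle inequality the
linear part has modulus at least `| |λ| - 1/|λ| | |z|`, and `(|λ| - 1/|λ|)² = |λ|² + 1/|λ|² - 2 = 2`
on `Λ`. With `c = 1/√2` this gives `|P(η₀ + z)| ≥ |z| - |z|² ≥ |z|/2` for `|z| ≤ 1/2`.
-/

open ComplexConjugate

noncomputable section

namespace Complex

def symbol (c : ℝ) (lam η : ℂ) : ℂ := (‖η‖ : ℂ) ^ 2 + c * (lam * conj η + η / lam)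

def symbolRoot (c : ℝ) (lam : ℂ) : ℂ := -c * (lam + 1 / conj lam)

theorem symbol_symbolRoot_add (c : ℝ) {lam : ℂ} (hlam : lam ≠ 0) (z : ℂ) :
    symbol c lam (symbolRoot c lam + z) =
      (‖z‖ : ℂ) ^ 2 - c * (conj z / conj lam + conj lam * z) := by
  have hlam' : conj lam ≠ 0 := (map_ne_zero _).mpr hlam
  simp only [symbol, symbolRoot, ← mul_conj', map_add, map_mul, map_neg, map_div₀, map_one,
    conj_ofReal, conj_conj]
  field_simp
  ring

theorem abs_norm_sub_inv_mul_le_norm_conj_div_add (lam z : ℂ) :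
    |‖lam‖ - ‖lam‖⁻¹| * ‖z‖ ≤ ‖conj z / conj lam + conj lam * z‖ := by
  calc |‖lam‖ - ‖lam‖⁻¹| * ‖z‖ = |‖conj lam * z‖ - ‖-(conj z / conj lam)‖| := by
        rw [norm_neg, norm_mul, norm_div, norm_conj, norm_conj, ← abs_norm z, ← abs_mul,
          abs_norm]
        ring_nf
    _ ≤ ‖conj lam * z - -(conj z / conj lam)‖ := abs_norm_sub_norm_le _ _
    _ = ‖conj z / conj lam + conj lam * z‖ := by rw [sub_neg_eq_add, add_comm]

theorem norm_symbol_symbolRoot_add_ge (c : ℝ) {lam : ℂ} (hlam : lam ≠ 0) (z : ℂ) :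
    |c| * |‖lam‖ - ‖lam‖⁻¹| * ‖z‖ - ‖z‖ ^ 2 ≤ ‖symbol c lam (symbolRoot c lam + z)‖ := by
  rw [symbol_symbolRoot_add c hlam, norm_sub_rev]
  calc |c| * |‖lam‖ - ‖lam‖⁻¹| * ‖z‖ - ‖z‖ ^ 2
      ≤ ‖(c : ℂ) * (conj z / conj lam + conj lam * z)‖ - ‖(‖z‖ : ℂ) ^ 2‖ := by
        rw [norm_mul, norm_real, Real.norm_eq_abs, mul_assoc, norm_pow, norm_real, norm_norm]
        gcongr
        exact abs_norm_sub_inv_mul_le_norm_conj_div_add lam z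
    _ ≤ _ := norm_sub_norm_le _ _

end Complex

end

theorem Real.abs_sub_inv_eq_sqrt_two {r : ℝ} (h : r ^ 2 + 1 / r ^ 2 = 4) : |r - r⁻¹| = √2 := by
  have hr : r ≠ 0 := by rintro rfl; norm_num at h
  rw [← Real.sqrt_sq_eq_abs]
  congr 1
  field_simp at h ⊢
  linear_combination h

open Complex in
/-- There are `γ, ρ > 0` such that for every `λ` with
`|λ|² + 1/|λ|² = 4` and every `η` with `|η - η₀(λ)| ≤ ρ`, where
`η₀(λ) = -(1/√2)(λ + 1/λ̄)`, one has
`| |η|² + (1/√2)(λ η̄ + η/λ) | ≥ γ |η - η₀(λ)|`. -/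
theorem symbol_lower_bound_near_eta0 :
    ∃ γ : ℝ, 0 < γ ∧ ∃ ρ : ℝ, 0 < ρ ∧ ∀ lam : ℂ,
      ‖lam‖ ^ 2 + 1 / ‖lam‖ ^ 2 = 4 →
      ∀ η : ℂ,
        ‖η - (-(1 / (Real.sqrt 2) : ℂ) * (lam + 1 / starRingEnd ℂ lam))‖ ≤ ρ →
        ‖(‖η‖ : ℂ) ^ 2
            + (1 / (Real.sqrt 2) : ℂ) * (lam * (starRingEnd ℂ η) + η / lam)‖
          ≥ γ * ‖η - (-(1 / (Real.sqrt 2) : ℂ) * (lam + 1 / starRingEnd ℂ lam))‖ := by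
  refine ⟨1 / 2, by norm_num, 1 / 2, by norm_num, fun lam hlam η hη => ?_⟩
  have hlam0 : lam ≠ 0 := by rintro rfl; norm_num at hlam
  have hcoef : |1 / √2| * |‖lam‖ - ‖lam‖⁻¹| = 1 := by
    rw [Real.abs_sub_inv_eq_sqrt_two hlam, abs_of_pos (by positivity)]
    field_simp
  have hbound := norm_symbol_symbolRoot_add_ge (1 / √2) hlam0 (η - symbolRoot (1 / √2) lam)
  simp only [symbol, symbolRoot, add_sub_cancel, ofReal_div, ofReal_one, hcoef, one_mul]
    at hbound ⊢
  nlinarith [norm_nonneg (η - -(1 / (√2 : ℂ)) * (lam + 1 / conj lam))]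
end

section
/- Let $s>2$, let $A'>A>1$, let $D=\{\lambda\in\mathbb{C}:A^{-1}<|\lambda|<A\}$ and $D'=\{\lambda\in\mathbb{C}:(A')^{-1}<|\lambda|<A'\}$, and let $g\in L^2(\mathbb{C})$ vanish almost everywhere on $D'$. Then the map sending $f\in L^s(\mathbb{C})$ to the function $\overline{D}\ni\lambda\mapsto\int_{\mathbb{C}}\frac{g(\varsigma)f(\varsigma)}{\varsigma-\lambda}\,dA(\varsigma)$ is a compact continuous linear operator from $L^s(\mathbb{C})$ to the Banach space $C(\overline{D})$ of continuous functions on $\overline{D}$ with the supremum norm. -/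
/-!
Off `D'`, the Cauchy kernel is controlled uniformly in `λ ∈ D̄`: since `|ς - λ|` is bounded
below both by the gap between the annuli and by `|ς| - A`, one gets
`|ς - λ|⁻¹ ≤ M (1 + |ς|)⁻¹`, and the same bound (times `|λ₁ - λ₂|`) for the difference of
two kernels. As `(1 + |ς|)⁻¹ ∈ Lᵗ(ℂ)` for `1/t = 1/2 - 1/s` (because `t > 2 = dim_ℝ ℂ`),
Hölder's inequality puts `|g| (1 + |ς|)⁻¹` in `L^{s'}`, `1/s + 1/s' = 1`. Thus
`λ ↦ g(ς)/(ς - λ)` is a Lipschitz map from the compact set `D̄` into `L^{s'} ⊆ (Lˢ)*`, and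
evaluating a continuous family of functionals over a compact space is a compact operator into
`C(D̄)` by Arzelà–Ascoli.
-/

open MeasureTheory Metric
open scoped ENNReal BoundedContinuousFunction

namespace ContinuousMap

variable {𝕜 E F X : Type*} [NontriviallyNormedField 𝕜] [NormedAddCommGroup E] [NormedSpace 𝕜 E]
  [NormedAddCommGroup F] [NormedSpace 𝕜 F] [TopologicalSpace X] [CompactSpace X]

noncomputable def flipCLM (κ : C(X, E →L[𝕜] F)) : E →L[𝕜] (X →ᵇ F) :=
  LinearMap.mkContinuous
    { toFun := fun f => BoundedContinuousFunction.mkOfCompact ⟨fun x => κ x f, by fun_prop⟩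
      map_add' := fun f g => by ext; simp
      map_smul' := fun c f => by ext; simp }
    ‖BoundedContinuousFunction.mkOfCompact κ‖
    fun f => (BoundedContinuousFunction.norm_le (by positivity)).2 fun x =>
      (κ x).le_of_opNorm_le
        ((BoundedContinuousFunction.mkOfCompact κ).norm_coe_le_norm x) f

@[simp]
theorem flipCLM_apply (κ : C(X, E →L[𝕜] F)) (f : E) (x : X) : κ.flipCLM f x = κ x f := rfl

theorem isCompactOperator_flipCLM [ProperSpace F] (κ : C(X, E →L[𝕜] F)) :
    IsCompactOperator κ.flipCLM := by
  rw [← ContinuousLinearMap.coe_coe,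
    isCompactOperator_iff_isCompact_closure_image_closedBall _ zero_lt_one]
  refine BoundedContinuousFunction.arzela_ascoli (closedBall 0 ‖κ.flipCLM‖)
    (isCompact_closedBall _ _) _ ?_ ?_
  · rintro _ x ⟨f, hf, rfl⟩
    rw [mem_closedBall_zero_iff] at hf ⊢
    exact (BoundedContinuousFunction.norm_coe_le_norm _ x).trans <|
      (κ.flipCLM.le_opNorm f).trans (mul_le_of_le_one_right (norm_nonneg _) hf)
  · intro x₀
    refine Metric.equicontinuousAt_of_continuity_modulus (fun x => dist (κ x₀) (κ x)) ?_ _ ?_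
    · simpa using (tendsto_const_nhds (x := κ x₀)).dist (κ.continuous.tendsto x₀)
    · refine Filter.Eventually.of_forall fun x ⟨_, f, hf, hTf⟩ => ?_
      subst hTf
      rw [mem_closedBall_zero_iff] at hf
      change dist (κ x₀ f) (κ x f) ≤ _
      rw [dist_eq_norm, dist_eq_norm, ← _root_.sub_apply]
      exact ((κ x₀ - κ x).le_opNorm f).trans (mul_le_of_le_one_right (norm_nonneg _) hf)

end ContinuousMap

section LpKernel

variable {α E 𝕜 X : Type*} [RCLike 𝕜] [MeasurableSpace α] {μ : Measure α} [NormedAddCommGroup E]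
  [PseudoMetricSpace X] {p q : ℝ≥0∞}

theorem lipschitzWith_toLp_of_norm_sub_le [Fact (1 ≤ q)] {K : X → α → E}
    (hK : ∀ x, MemLp (K x) q μ) {φ : α → ℝ} (hφ : MemLp φ q μ)
    (hKφ : ∀ x y, ∀ᵐ a ∂μ, ‖K x a - K y a‖ ≤ dist x y * φ a) :
    LipschitzWith (eLpNorm φ q μ).toNNReal fun x => (hK x).toLp (K x) := by
  refine LipschitzWith.of_dist_le_mul fun x y => ?_
  rw [dist_eq_norm, ← MemLp.toLp_sub, Lp.norm_toLp, ENNReal.coe_toNNReal_eq_toReal, mul_comm]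
  have hle : ∀ᵐ a ∂μ, ‖(K x - K y) a‖ ≤ dist x y * ‖φ a‖ := by
    filter_upwards [hKφ x y] with a ha
    exact ha.trans (mul_le_mul_of_nonneg_left (Real.le_norm_self _) dist_nonneg)
  calc (eLpNorm (K x - K y) q μ).toReal
      ≤ (ENNReal.ofReal (dist x y) * eLpNorm φ q μ).toReal :=
        ENNReal.toReal_mono (by finiteness [hφ.eLpNorm_ne_top])
          (eLpNorm_le_mul_eLpNorm_of_ae_le_mul hle q)
    _ = dist x y * (eLpNorm φ q μ).toReal := by
        rw [ENNReal.toReal_mul, ENNReal.toReal_ofReal dist_nonneg]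

theorem exists_isCompactOperator_eq_integral_mul [CompactSpace X] [Fact (1 ≤ p)] [Fact (1 ≤ q)]
    [q.HolderConjugate p] {K : X → α → 𝕜} {φ : α → ℝ} (hφ : MemLp φ q μ)
    (hK : ∀ x, AEStronglyMeasurable (K x) μ) (hKφ : ∀ x, ∀ᵐ a ∂μ, ‖K x a‖ ≤ φ a)
    (hKφ' : ∀ x y, ∀ᵐ a ∂μ, ‖K x a - K y a‖ ≤ dist x y * φ a) :
    ∃ T : Lp 𝕜 p μ →L[𝕜] (X →ᵇ 𝕜),
      IsCompactOperator T ∧ ∀ f x, T f x = ∫ a, K x a * f a ∂μ := by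
  have hKq : ∀ x, MemLp (K x) q μ := fun x =>
    hφ.of_le (hK x) ((hKφ x).mono fun a ha => ha.trans (Real.le_norm_self _))
  let κ : C(X, StrongDual 𝕜 (Lp 𝕜 p μ)) :=
    ⟨fun x => (ContinuousLinearMap.mul 𝕜 𝕜).lpPairing μ q p ((hKq x).toLp (K x)),
      (ContinuousLinearMap.continuous _).comp
        (lipschitzWith_toLp_of_norm_sub_le hKq hφ hKφ').continuous⟩
  refine ⟨κ.flipCLM, κ.isCompactOperator_flipCLM, fun f x => ?_⟩
  rw [ContinuousMap.flipCLM_apply, ContinuousMap.coe_mk, ContinuousLinearMap.lpPairing_eq_integral]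
  refine integral_congr_ae ?_
  filter_upwards [(hKq x).coeFn_toLp] with a ha
  simp [ha]

end LpKernel

section Annulus

variable {E : Type*} [SeminormedAddCommGroup E] {r R r' R' : ℝ}

theorem norm_mem_Icc_of_mem_closure_annulus {l : E}
    (hl : l ∈ closure {l : E | r < ‖l‖ ∧ ‖l‖ < R}) : ‖l‖ ∈ Set.Icc r R :=
  closure_minimal (t := norm ⁻¹' Set.Icc r R) (fun _ hx => ⟨hx.1.le, hx.2.le⟩)
    (isClosed_Icc.preimage continuous_norm) hl

theorem isCompact_closure_annulus [ProperSpace E] :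
    IsCompact (closure {l : E | r < ‖l‖ ∧ ‖l‖ < R}) :=
  (isBounded_closedBall (x := (0 : E)) (r := R)).subset
    (fun _ hx => mem_closedBall_zero_iff.2 hx.2.le) |>.isCompact_closure

theorem min_sub_le_norm_sub_of_mem_Icc_of_notMem_Ioo {l z : E} (hl : ‖l‖ ∈ Set.Icc r R)
    (hz : ‖z‖ ∉ Set.Ioo r' R') : min (r - r') (R' - R) ≤ ‖z - l‖ := by
  rw [Set.mem_Ioo, not_and_or, not_lt, not_lt] at hz
  rcases hz with hz | hz
  · exact (min_le_left _ _).trans (by linarith [hl.1, norm_sub_norm_le l z, norm_sub_rev l z])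
  · exact (min_le_right _ _).trans (by linarith [hl.2, norm_sub_norm_le z l])

end Annulus

section CauchyKernel

variable {𝕜 : Type*} [NormedField 𝕜]

theorem norm_inv_sub_le {δ R : ℝ} {z l : 𝕜} (hδ : 0 < δ) (hl : ‖l‖ ≤ R)
    (hzl : δ ≤ ‖z - l‖) : ‖(z - l)⁻¹‖ ≤ (1 + R + δ) / δ * (1 + ‖z‖)⁻¹ := by
  have hz : 1 + ‖z‖ ≤ 1 + R + ‖z - l‖ := by
    linarith [norm_le_norm_add_norm_sub' z l]
  have hR : 0 ≤ 1 + R := by linarith [norm_nonneg l]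
  rw [norm_inv, ← div_eq_mul_inv, le_div_iff₀ (by positivity),
    inv_mul_le_iff₀ (hδ.trans_le hzl)]
  calc 1 + ‖z‖ ≤ (1 + R) * (‖z - l‖ / δ) + ‖z - l‖ := by
        nlinarith [(one_le_div hδ).2 hzl]
    _ = ‖z - l‖ * ((1 + R + δ) / δ) := by field_simp

theorem norm_mul_inv_sub_sub_mul_inv_sub_le {δ R : ℝ} {c z l₁ l₂ : 𝕜} (hδ : 0 < δ)
    (hl₁ : ‖l₁‖ ≤ R) (hl₂ : ‖l₂‖ ≤ R) (hzl₁ : δ ≤ ‖z - l₁‖) (hzl₂ : δ ≤ ‖z - l₂‖) :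
    ‖c * (z - l₁)⁻¹ - c * (z - l₂)⁻¹‖ ≤
      ‖l₁ - l₂‖ * (((1 + R + δ) / δ) ^ 2 * (‖c‖ * (1 + ‖z‖)⁻¹)) := by
  have hw₀ : 0 ≤ (1 + ‖z‖)⁻¹ := by positivity
  have hw₁ : (1 + ‖z‖)⁻¹ ≤ 1 := inv_le_one_of_one_le₀ (by linarith [norm_nonneg z])
  have hM : 0 ≤ (1 + R + δ) / δ := div_nonneg (by linarith [norm_nonneg l₁]) hδ.le
  have h₁ := norm_inv_sub_le hδ hl₁ hzl₁
  have h₂ := norm_inv_sub_le hδ hl₂ hzl₂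
  rw [← mul_sub, inv_sub_inv' (norm_pos_iff.1 (hδ.trans_le hzl₁))
    (norm_pos_iff.1 (hδ.trans_le hzl₂)), sub_sub_sub_cancel_left]
  simp only [norm_mul]
  calc ‖c‖ * (‖(z - l₁)⁻¹‖ * ‖l₁ - l₂‖ * ‖(z - l₂)⁻¹‖)
      ≤ ‖c‖ * ((1 + R + δ) / δ * (1 + ‖z‖)⁻¹ * ‖l₁ - l₂‖ * ((1 + R + δ) / δ * (1 + ‖z‖)⁻¹)) := by
        gcongr
    _ ≤ ‖c‖ * ((1 + R + δ) / δ * (1 + ‖z‖)⁻¹ * ‖l₁ - l₂‖ * ((1 + R + δ) / δ * 1)) := by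
        gcongr
    _ = ‖l₁ - l₂‖ * (((1 + R + δ) / δ) ^ 2 * (‖c‖ * (1 + ‖z‖)⁻¹)) := by ring

theorem exists_ae_cauchyKernel_bounds [MeasurableSpace 𝕜] {μ : Measure 𝕜} {g : 𝕜 → 𝕜}
    {r R r' R' : ℝ} (hr : r' < r) (hR : R < R')
    (hg : ∀ᵐ z ∂μ, (r' < ‖z‖ ∧ ‖z‖ < R') → g z = 0) :
    ∃ M : ℝ, ∀ᵐ z ∂μ, ∀ l₁ ∈ closure {l : 𝕜 | r < ‖l‖ ∧ ‖l‖ < R},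
      ∀ l₂ ∈ closure {l : 𝕜 | r < ‖l‖ ∧ ‖l‖ < R},
        ‖g z * (z - l₁)⁻¹‖ ≤ M * (‖g z‖ * (1 + ‖z‖)⁻¹) ∧
        ‖g z * (z - l₁)⁻¹ - g z * (z - l₂)⁻¹‖ ≤ dist l₁ l₂ * (M * (‖g z‖ * (1 + ‖z‖)⁻¹)) := by
  set δ := min (r - r') (R' - R)
  have hδ : 0 < δ := lt_min (by linarith) (by linarith)
  refine ⟨((1 + R + δ) / δ) ^ 2, ?_⟩
  filter_upwards [hg] with z hz l₁ hl₁ l₂ hl₂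
  by_cases hgz : g z = 0
  · simp [hgz]
  have hz' : ‖z‖ ∉ Set.Ioo r' R' := mt hz hgz
  have hl₁' := norm_mem_Icc_of_mem_closure_annulus hl₁
  have hl₂' := norm_mem_Icc_of_mem_closure_annulus hl₂
  have hzl₁ := min_sub_le_norm_sub_of_mem_Icc_of_notMem_Ioo hl₁' hz'
  have hzl₂ := min_sub_le_norm_sub_of_mem_Icc_of_notMem_Ioo hl₂' hz'
  have hM : 1 ≤ (1 + R + δ) / δ := (one_le_div hδ).2 (by linarith [norm_nonneg l₁, hl₁'.2])
  refine ⟨?_, dist_eq_norm l₁ l₂ ▸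
    norm_mul_inv_sub_sub_mul_inv_sub_le hδ hl₁'.2 hl₂'.2 hzl₁ hzl₂⟩
  calc ‖g z * (z - l₁)⁻¹‖ ≤ ‖g z‖ * ((1 + R + δ) / δ * (1 + ‖z‖)⁻¹) := by
        rw [norm_mul]; gcongr; exact norm_inv_sub_le hδ hl₁'.2 hzl₁
    _ ≤ ‖g z‖ * (((1 + R + δ) / δ) ^ 2 * (1 + ‖z‖)⁻¹) := by
        gcongr; exact le_self_pow₀ hM two_ne_zero
    _ = _ := by ring

end CauchyKernel

theorem ENNReal.HolderConjugate.holderTriple_two {p q : ℝ≥0∞} [p.HolderConjugate q]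
    (hp : 2 ≤ p) : HolderTriple 2 (2⁻¹ - p⁻¹)⁻¹ q := by
  rw [holderTriple_iff, inv_inv, ← HolderConjugate.one_sub_inv p q, ← ENNReal.inv_two_add_inv_two,
    (ENNReal.cancel_of_ne (ENNReal.inv_ne_top.2 (by positivity))).add_tsub_assoc_of_le
      (ENNReal.inv_le_inv.2 hp)]

theorem ENNReal.two_lt_inv_two_sub_inv {p : ℝ≥0∞} (hp : p ≠ ∞) : 2 < (2⁻¹ - p⁻¹)⁻¹ := by
  rw [ENNReal.lt_inv_iff_lt_inv]
  exact ENNReal.sub_lt_self (by simp) (by simp) (ENNReal.inv_ne_zero.2 hp)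

theorem memLp_inv_one_add_norm {E : Type*} [NormedAddCommGroup E] [NormedSpace ℝ E]
    [FiniteDimensional ℝ E] [MeasurableSpace E] [BorelSpace E] (μ : Measure E)
    [μ.IsAddHaarMeasure] {r : ℝ≥0∞} (hr : (Module.finrank ℝ E : ℝ≥0∞) < r) :
    MemLp (fun x : E => (1 + ‖x‖)⁻¹) r μ := by
  have hmeas : AEStronglyMeasurable (fun x : E => (1 + ‖x‖)⁻¹) μ :=
    (by fun_prop : Measurable fun x : E => (1 + ‖x‖)⁻¹).aestronglyMeasurable
  rcases eq_or_ne r ∞ with rfl | hr_top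
  · refine memLp_top_of_bound hmeas 1 (ae_of_all _ fun x => ?_)
    rw [Real.norm_of_nonneg (by positivity)]
    exact inv_le_one_of_one_le₀ (by linarith [norm_nonneg x])
  rw [← integrable_norm_rpow_iff hmeas (pos_of_gt hr).ne' hr_top]
  refine (integrable_one_add_norm (μ := μ) (r := r.toReal) ?_).congr (ae_of_all _ fun x => ?_)
  · exact_mod_cast ENNReal.toReal_strict_mono hr_top hr
  · dsimp only
    rw [Real.norm_of_nonneg (by positivity), Real.inv_rpow (by positivity),
      Real.rpow_neg (by positivity)]

theorem memLp_norm_mul_inv_one_add_norm {E : Type*} [NormedAddCommGroup E] [NormedSpace ℝ E]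
    [FiniteDimensional ℝ E] [MeasurableSpace E] [BorelSpace E] {μ : Measure E}
    [μ.IsAddHaarMeasure] (hE : Module.finrank ℝ E ≤ 2) {g : E → ℂ} (hg : MemLp g 2 μ)
    {p q : ℝ≥0∞} [p.HolderConjugate q] (hp : 2 ≤ p) (hp_top : p ≠ ∞) :
    MemLp (fun z => ‖g z‖ * (1 + ‖z‖)⁻¹) q μ :=
  haveI := ENNReal.HolderConjugate.holderTriple_two (q := q) hp
  (memLp_inv_one_add_norm μ ((Nat.cast_le.2 hE).trans_lt (mod_cast
    ENNReal.two_lt_inv_two_sub_inv hp_top))).mul' hg.norm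

/-- For `s > 2`, `1 < A < A'`, annuli
`D = {A⁻¹ < |λ| < A}`, `D' = {A'⁻¹ < |λ| < A'}`, and `g ∈ L²(ℂ)` vanishing a.e.
on `D'`, the map `f ↦ (λ ↦ ∫ g(ς)f(ς)/(ς-λ) dA(ς))` is a compact continuous
linear operator from `Lˢ(ℂ)` to `C(D̄)` (continuous functions on `D̄` with the
sup norm). -/
theorem cauchy_transform_compact_to_C (s A A' : ℝ) (hs : 2 < s) (hA : 1 < A)
    (hAA' : A < A') (g : ℂ → ℂ) (hg : MemLp g 2 (volume : Measure ℂ))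
    (hg0 : ∀ᵐ ς : ℂ, ((A')⁻¹ < ‖ς‖ ∧ ‖ς‖ < A') → g ς = 0) :
    haveI : Fact (1 ≤ ENNReal.ofReal s) :=
      ⟨by rw [ENNReal.one_le_ofReal]; linarith⟩
    ∃ T : Lp ℂ (ENNReal.ofReal s) (volume : Measure ℂ) →L[ℂ]
        BoundedContinuousFunction
          (closure {l : ℂ | A⁻¹ < ‖l‖ ∧ ‖l‖ < A}) ℂ,
      IsCompactOperator T ∧
      ∀ f : Lp ℂ (ENNReal.ofReal s) (volume : Measure ℂ),
        ∀ lam : closure {l : ℂ | A⁻¹ < ‖l‖ ∧ ‖l‖ < A},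
          T f lam = ∫ ς : ℂ, g ς * (f : ℂ → ℂ) ς / (ς - (lam : ℂ)) := by
  have : Fact (1 ≤ ENNReal.ofReal s) := ⟨by rw [ENNReal.one_le_ofReal]; linarith⟩
  set q := ENNReal.conjExponent (ENNReal.ofReal s)
  have : Fact (1 ≤ q) := ⟨ENNReal.HolderConjugate.one_le q (ENNReal.ofReal s)⟩
  have hψ : MemLp (fun z => ‖g z‖ * (1 + ‖z‖)⁻¹) q volume :=
    memLp_norm_mul_inv_one_add_norm (p := ENNReal.ofReal s) Complex.finrank_real_complex.le hg
      (by rw [← ENNReal.ofReal_ofNat]; exact ENNReal.ofReal_le_ofReal hs.le) ENNReal.ofReal_ne_top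
  obtain ⟨M, hM⟩ := exists_ae_cauchyKernel_bounds (inv_strictAnti₀ (by linarith) hAA') hAA' hg0
  have : CompactSpace (closure {l : ℂ | A⁻¹ < ‖l‖ ∧ ‖l‖ < A}) :=
    isCompact_iff_compactSpace.1 isCompact_closure_annulus
  obtain ⟨T, hT, hTf⟩ := exists_isCompactOperator_eq_integral_mul (p := ENNReal.ofReal s)
    (K := fun (l : closure {l : ℂ | A⁻¹ < ‖l‖ ∧ ‖l‖ < A}) z => g z * (z - l)⁻¹)
    (hψ.const_mul M) (fun l => hg.1.mul (by fun_prop))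
    (fun l => hM.mono fun z hz => (hz l l.2 l l.2).1)
    (fun l₁ l₂ => hM.mono fun z hz => (hz l₁ l₁.2 l₂ l₂.2).2)
  exact ⟨T, hT, fun f l => (hTf f l).trans (by simp only [div_eq_mul_inv, mul_right_comm])⟩
end
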